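/- arXiv:1812.07528 — 2 statements merged into one kernel-verified Lean document; each statement's English description precedes it below -/
import Mathlib

section
/- Let α > 1, ξ > 0, r > 0, and θ ∈ (0, π). Define J(ξ + re^{iθ}, ξ) = i r^{(3α/2)-1} ∫_{-θ}^{θ} (e^{iφ} - e^{iθ})^α (e^{iφ} - e^{-iθ})^{α-2} (ξ + re^{iφ})^{-α/2} e^{iφ(1 - α/2)} dφ. Then there is a constant C = C(α), independent of r, θ, ξ, such that |J(ξ + re^{iθ}, ξ)| ≤ C r^{α-1}. -/
/-!
Taking norms, the integrand is `A ^ α * B ^ (α - 2) * E ^ (-α / 2)` with the chords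
`A = ‖e^{iφ} - e^{iθ}‖`, `B = ‖e^{iφ} - e^{-iθ}‖` and `E = ‖ξ + r e^{iφ}‖`. Since
`A ≤ 2 ‖e^{iφ} + 1‖ ≤ (4 / r) E`, half of `A ^ α` absorbs `E ^ (-α / 2)`, leaving
`(4 / r) ^ (α / 2) * A ^ (α / 2) * B ^ (α - 2)`. On the upper half of the arc `A ≤ B`, so this is
essentially `A ^ (3α/2 - 2)`; on the lower half it is essentially `B ^ (α - 2)`. Jordan's
inequality bounds the chords below by `(2 / π) (θ ∓ φ)`, and since `α - 2` and `3α/2 - 2` exceed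
`-1` the resulting majorant has integral bounded independently of `θ`. Finally
`r ^ (3α/2 - 1) * r ^ (-α/2) = r ^ (α - 1)`.
-/

open scoped Real ComplexConjugate
open Complex MeasureTheory

section RpowBounds

variable {a b c e x L p q s : ℝ}

lemma Real.rpow_le_rpow_add_rpow_of_mem_Icc (ha : 0 < a) (hx : x ∈ Set.Icc a b) :
    x ^ s ≤ a ^ s + b ^ s := by
  have hb : 0 ≤ b ^ s := Real.rpow_nonneg (ha.le.trans (hx.1.trans hx.2)) s
  rcases le_total 0 s with hs | hs
  · have := Real.rpow_le_rpow (ha.le.trans hx.1) hx.2 hs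
    have := Real.rpow_nonneg ha.le s
    linarith
  · have := Real.rpow_le_rpow_of_nonpos ha hx.1 hs
    linarith

lemma Real.rpow_mul_rpow_le_rpow_add_rpow (ha : 0 < a) (hab : a ≤ b) (hbL : b ≤ L) (hp : 0 ≤ p) :
    a ^ p * b ^ q ≤ a ^ (p + q) + L ^ (p + q) := by
  have hb : 0 < b := ha.trans_le hab
  rcases le_total q 0 with hq | hq
  · calc a ^ p * b ^ q ≤ a ^ p * a ^ q :=
          mul_le_mul_of_nonneg_left (Real.rpow_le_rpow_of_nonpos ha hab hq) (by positivity)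
      _ = a ^ (p + q) := (Real.rpow_add ha p q).symm
      _ ≤ _ := le_add_of_nonneg_right (Real.rpow_nonneg (hb.le.trans hbL) _)
  · calc a ^ p * b ^ q ≤ b ^ p * b ^ q := by gcongr
      _ = b ^ (p + q) := (Real.rpow_add hb p q).symm
      _ ≤ L ^ (p + q) := by gcongr
      _ ≤ _ := le_add_of_nonneg_left (Real.rpow_nonneg ha.le _)

lemma Real.rpow_two_mul_mul_rpow_neg_le (ha : 0 ≤ a) (hc : 0 ≤ c) (hace : a ≤ c * e)
    (hp : 0 < p) : a ^ (2 * p) * e ^ (-p) ≤ c ^ p * a ^ p := by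
  rcases ha.eq_or_lt with rfl | ha
  · rw [Real.zero_rpow (by positivity), zero_mul]
    positivity
  have he : 0 < e := pos_of_mul_pos_right (ha.trans_le hace) hc
  calc a ^ (2 * p) * e ^ (-p) = a ^ p * e ^ (-p) * a ^ p := by
        rw [two_mul, Real.rpow_add ha]; ring
    _ ≤ (c * e) ^ p * e ^ (-p) * a ^ p := by gcongr
    _ = c ^ p * a ^ p := by
        rw [Real.mul_rpow hc he.le, mul_assoc (c ^ p), ← Real.rpow_add he, add_neg_cancel,
          Real.rpow_zero, mul_one]

end RpowBounds

lemma Complex.norm_exp_mul_I_sub_exp_mul_I (x y : ℝ) :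
    ‖exp (x * I) - exp (y * I)‖ = 2 * |Real.sin ((x - y) / 2)| := by
  have : exp (x * I) - exp (y * I) = exp (y * I) * (exp (I * ↑(x - y)) - 1) := by
    rw [mul_sub, ← exp_add, mul_one]; push_cast; ring_nf
  rw [this, norm_mul, norm_exp_ofReal_mul_I, one_mul, norm_exp_I_mul_ofReal_sub_one, norm_mul,
    Real.norm_eq_abs, Real.norm_eq_abs, abs_two]

lemma Complex.norm_exp_mul_I_sub_exp_mul_I_le_two (x y : ℝ) :
    ‖exp (x * I) - exp (y * I)‖ ≤ 2 := by
  rw [norm_exp_mul_I_sub_exp_mul_I]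
  nlinarith [Real.abs_sin_le_one ((x - y) / 2)]

lemma Complex.two_div_pi_mul_abs_sub_le_norm_exp_mul_I_sub_exp_mul_I {x y : ℝ} (h : |x - y| ≤ π) :
    2 / π * |x - y| ≤ ‖exp (x * I) - exp (y * I)‖ := by
  have := Real.mul_abs_le_abs_sin (x := (x - y) / 2) (by rw [abs_div, abs_two]; linarith)
  rw [norm_exp_mul_I_sub_exp_mul_I, abs_div, abs_two] at *
  linarith

lemma Complex.norm_sub_le_norm_sub_conj {z w : ℂ} (h : 0 ≤ z.im * w.im) :
    ‖z - w‖ ≤ ‖z - conj w‖ := by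
  rw [← sq_le_sq₀ (norm_nonneg _) (norm_nonneg _), Complex.sq_norm, Complex.sq_norm,
    normSq_apply, normSq_apply]
  simp only [sub_re, sub_im, conj_re, conj_im]
  nlinarith

lemma Complex.exp_neg_mul_I (θ : ℝ) : exp (-θ * I) = conj (exp (θ * I)) := by
  rw [← exp_conj]; simp

lemma Complex.norm_exp_mul_I_add_one_le {φ θ : ℝ} (hφ : |φ| ≤ θ) (hθ : θ ≤ π) :
    ‖exp (θ * I) + 1‖ ≤ ‖exp (φ * I) + 1‖ := by
  have h : ∀ x : ℝ, ‖exp (x * I) + 1‖ ^ 2 = 2 + 2 * Real.cos x := by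
    intro x
    rw [Complex.sq_norm, normSq_apply]
    simp only [add_re, add_im, exp_ofReal_mul_I_re, exp_ofReal_mul_I_im, one_re, one_im]
    nlinarith [Real.sin_sq_add_cos_sq x]
  rw [← sq_le_sq₀ (norm_nonneg _) (norm_nonneg _), h, h, ← Real.cos_abs φ]
  linarith [Real.cos_le_cos_of_nonneg_of_le_pi (abs_nonneg φ) hθ hφ]

lemma Complex.norm_exp_mul_I_sub_le_two_mul_norm_add_one {φ θ : ℝ} (hφ : |φ| ≤ θ) (hθ : θ ≤ π) :
    ‖exp (φ * I) - exp (θ * I)‖ ≤ 2 * ‖exp (φ * I) + 1‖ :=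
  calc ‖exp (φ * I) - exp (θ * I)‖ = ‖(exp (φ * I) + 1) - (exp (θ * I) + 1)‖ := by ring_nf
    _ ≤ ‖exp (φ * I) + 1‖ + ‖exp (θ * I) + 1‖ := norm_sub_le _ _
    _ ≤ 2 * ‖exp (φ * I) + 1‖ := by linarith [norm_exp_mul_I_add_one_le hφ hθ]

lemma Complex.mul_norm_add_one_le_two_mul_norm_add {z : ℂ} (hz : ‖z‖ = 1) {ξ r : ℝ} (hξ : 0 ≤ ξ)
    (hr : 0 ≤ r) : r * ‖z + 1‖ ≤ 2 * ‖(ξ : ℂ) + r * z‖ := by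
  have hz' : z.re * z.re + z.im * z.im = 1 := by
    rw [← normSq_apply, ← Complex.sq_norm, hz, one_pow]
  rw [← sq_le_sq₀ (by positivity) (by positivity), mul_pow, mul_pow, Complex.sq_norm,
    Complex.sq_norm, normSq_apply, normSq_apply]
  simp only [add_re, add_im, one_re, one_im, ofReal_re, ofReal_im, re_ofReal_mul, im_ofReal_mul]
  rcases le_total 0 z.re with hx | hx
  · nlinarith [mul_nonneg hξ (mul_nonneg hr hx), sq_nonneg (r * z.im), sq_nonneg ξ]
  · nlinarith [sq_nonneg (ξ + r * z.re), mul_nonneg (mul_nonneg hr hr) (sq_nonneg z.re)]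

section ChordProducts

variable {α θ φ : ℝ}

lemma rpow_chord_mul_rpow_chord_le_of_nonneg (hα : 0 ≤ α) (hθ : θ < π) (hφ₀ : 0 ≤ φ)
    (hφ : φ < θ) :
    ‖exp (φ * I) - exp (θ * I)‖ ^ (α / 2) * ‖exp (φ * I) - exp (-θ * I)‖ ^ (α - 2)
      ≤ (2 / π) ^ (3 * α / 2 - 2) * (θ - φ) ^ (3 * α / 2 - 2) + 2 * 2 ^ (3 * α / 2 - 2) := by
  have hB2 := norm_exp_mul_I_sub_exp_mul_I_le_two φ (-θ)
  rw [ofReal_neg] at hB2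
  rw [exp_neg_mul_I] at hB2 ⊢
  set A := ‖exp (φ * I) - exp (θ * I)‖
  set B := ‖exp (φ * I) - conj (exp (θ * I))‖
  -- the real axis is the perpendicular bisector of `e^{iθ}` and `e^{-iθ}`
  have hAB : A ≤ B := by
    apply norm_sub_le_norm_sub_conj
    simp only [exp_ofReal_mul_I_im]
    exact mul_nonneg (Real.sin_nonneg_of_nonneg_of_le_pi hφ₀ (by linarith))
      (Real.sin_nonneg_of_nonneg_of_le_pi (by linarith) hθ.le)
  have hcA : 2 / π * (θ - φ) ≤ A := by
    have := two_div_pi_mul_abs_sub_le_norm_exp_mul_I_sub_exp_mul_I (x := φ) (y := θ)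
      (by rw [abs_sub_comm, abs_of_pos (by linarith)]; linarith)
    rwa [abs_sub_comm, abs_of_pos (by linarith)] at this
  have hcA₀ : 0 < 2 / π * (θ - φ) := mul_pos (by positivity) (by linarith)
  calc A ^ (α / 2) * B ^ (α - 2) ≤ A ^ (3 * α / 2 - 2) + 2 ^ (3 * α / 2 - 2) := by
        have h := Real.rpow_mul_rpow_le_rpow_add_rpow (q := α - 2) (hcA₀.trans_le hcA) hAB hB2
          (by linarith : 0 ≤ α / 2)
        rwa [show α / 2 + (α - 2) = 3 * α / 2 - 2 by ring] at h
    _ ≤ (2 / π * (θ - φ)) ^ (3 * α / 2 - 2) + 2 ^ (3 * α / 2 - 2) + 2 ^ (3 * α / 2 - 2) := by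
        gcongr
        exact Real.rpow_le_rpow_add_rpow_of_mem_Icc hcA₀
          ⟨hcA, norm_exp_mul_I_sub_exp_mul_I_le_two _ _⟩
    _ = _ := by rw [Real.mul_rpow (by positivity) (by linarith)]; ring

lemma rpow_chord_mul_rpow_chord_le_of_nonpos (hα : 0 ≤ α) (hθ : θ < π) (hφ₀ : φ ≤ 0) (hφ : -θ < φ) :
    ‖exp (φ * I) - exp (θ * I)‖ ^ (α / 2) * ‖exp (φ * I) - exp (-θ * I)‖ ^ (α - 2)
      ≤ 2 ^ (α / 2) * (2 / π) ^ (α - 2) * (θ + φ) ^ (α - 2) + 2 ^ (3 * α / 2 - 2) := by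
  have hcB : 2 / π * (θ + φ) ≤ ‖exp (φ * I) - exp (-θ * I)‖ := by
    have := two_div_pi_mul_abs_sub_le_norm_exp_mul_I_sub_exp_mul_I (x := φ) (y := -θ)
      (by rw [abs_of_pos (by linarith)]; linarith)
    rwa [sub_neg_eq_add, add_comm φ, abs_of_pos (by linarith), ofReal_neg] at this
  have hB2 := norm_exp_mul_I_sub_exp_mul_I_le_two φ (-θ)
  rw [ofReal_neg] at hB2
  calc _ ≤ 2 ^ (α / 2) * ‖exp (φ * I) - exp (-θ * I)‖ ^ (α - 2) := by
        gcongr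
        exact norm_exp_mul_I_sub_exp_mul_I_le_two _ _
    _ ≤ 2 ^ (α / 2) * ((2 / π * (θ + φ)) ^ (α - 2) + 2 ^ (α - 2)) := by
        gcongr
        exact Real.rpow_le_rpow_add_rpow_of_mem_Icc (mul_pos (by positivity) (by linarith))
          ⟨hcB, hB2⟩
    _ = _ := by
        rw [Real.mul_rpow (by positivity) (by linarith), mul_add, ← Real.rpow_add two_pos,
          show α / 2 + (α - 2) = 3 * α / 2 - 2 by ring]
        ring

end ChordProducts

noncomputable def arcIntegrand (α r θ ξ φ : ℝ) : ℂ :=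
  (exp (φ * I) - exp (θ * I)) ^ (α : ℂ) * (exp (φ * I) - exp (-θ * I)) ^ ((α : ℂ) - 2) *
    ((ξ : ℂ) + r * exp (φ * I)) ^ (-(α : ℂ) / 2) * exp (φ * I * (1 - α / 2))

noncomputable def arcMajorant (α θ φ : ℝ) : ℝ :=
  2 ^ (α / 2) * (2 / π) ^ (α - 2) * (θ + φ) ^ (α - 2) +
    (2 / π) ^ (3 * α / 2 - 2) * (θ - φ) ^ (3 * α / 2 - 2) + 2 * 2 ^ (3 * α / 2 - 2)

noncomputable def arcBound (α : ℝ) : ℝ :=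
  2 ^ (α / 2) * (2 / π) ^ (α - 2) * ((2 * π) ^ (α - 1) / (α - 1)) +
    (2 / π) ^ (3 * α / 2 - 2) * ((2 * π) ^ (3 * α / 2 - 1) / (3 * α / 2 - 1)) +
    2 * π * (2 * 2 ^ (3 * α / 2 - 2))

lemma rpow_chord_mul_rpow_chord_le_arcMajorant {α θ φ : ℝ} (hα : 0 ≤ α) (hθ : θ < π)
    (hφ : φ ∈ Set.Ioo (-θ) θ) :
    ‖exp (φ * I) - exp (θ * I)‖ ^ (α / 2) * ‖exp (φ * I) - exp (-θ * I)‖ ^ (α - 2)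
      ≤ arcMajorant α θ φ := by
  have hθφ : 0 ≤ θ + φ := by linarith [hφ.1]
  have hθφ' : 0 ≤ θ - φ := by linarith [hφ.2]
  have h₁ : 0 ≤ 2 ^ (α / 2) * (2 / π) ^ (α - 2) * (θ + φ) ^ (α - 2) := by positivity
  have h₂ : 0 ≤ (2 / π) ^ (3 * α / 2 - 2) * (θ - φ) ^ (3 * α / 2 - 2) := by positivity
  have h₃ : 0 ≤ (2 : ℝ) ^ (3 * α / 2 - 2) := by positivity
  unfold arcMajorant
  rcases le_total 0 φ with hφ₀ | hφ₀
  · linarith [rpow_chord_mul_rpow_chord_le_of_nonneg hα hθ hφ₀ hφ.2]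
  · linarith [rpow_chord_mul_rpow_chord_le_of_nonpos hα hθ hφ₀ hφ.1]

lemma norm_arcIntegrand_le {α r θ ξ φ : ℝ} (hα : 0 < α) (hr : 0 < r) (hξ : 0 ≤ ξ) (hθ : θ < π)
    (hφ : φ ∈ Set.Ioo (-θ) θ) :
    ‖arcIntegrand α r θ ξ φ‖ ≤ (4 / r) ^ (α / 2) * arcMajorant α θ φ := by
  set A := ‖exp (φ * I) - exp (θ * I)‖
  set B := ‖exp (φ * I) - exp (-θ * I)‖
  set E := ‖(ξ : ℂ) + r * exp (φ * I)‖
  have hnorm : ‖arcIntegrand α r θ ξ φ‖ = A ^ α * B ^ (α - 2) * E ^ (-(α / 2)) := by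
    have hB : (α : ℂ) - 2 = ((α - 2 : ℝ) : ℂ) := by push_cast; ring
    have hE : -(α : ℂ) / 2 = ((-(α / 2) : ℝ) : ℂ) := by push_cast; ring
    have hexp : (φ : ℂ) * I * (1 - α / 2) = ((φ * (1 - α / 2) : ℝ) : ℂ) * I := by push_cast; ring
    rw [arcIntegrand, norm_mul, norm_mul, norm_mul, hB, hE, hexp, norm_cpow_real, norm_cpow_real,
      norm_cpow_real, norm_exp_ofReal_mul_I, mul_one]
  have hAE : A ≤ 4 / r * E := by
    have h₁ := norm_exp_mul_I_sub_le_two_mul_norm_add_one (abs_lt.mpr ⟨hφ.1, hφ.2⟩).le hθ.le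
    have h₂ := mul_norm_add_one_le_two_mul_norm_add (norm_exp_ofReal_mul_I φ) hξ hr.le
    rw [div_mul_eq_mul_div, le_div_iff₀ hr]
    nlinarith
  have hAE' : A ^ α * E ^ (-(α / 2)) ≤ (4 / r) ^ (α / 2) * A ^ (α / 2) := by
    have h := Real.rpow_two_mul_mul_rpow_neg_le (norm_nonneg _) (by positivity) hAE
      (by linarith : 0 < α / 2)
    rwa [mul_div_cancel₀ α two_ne_zero] at h
  rw [hnorm]
  calc A ^ α * B ^ (α - 2) * E ^ (-(α / 2)) = A ^ α * E ^ (-(α / 2)) * B ^ (α - 2) := by ring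
    _ ≤ (4 / r) ^ (α / 2) * A ^ (α / 2) * B ^ (α - 2) := by gcongr
    _ ≤ (4 / r) ^ (α / 2) * arcMajorant α θ φ := by
        rw [mul_assoc]
        gcongr
        exact rpow_chord_mul_rpow_chord_le_arcMajorant hα.le hθ hφ

lemma intervalIntegrable_rpow_add {s : ℝ} (hs : -1 < s) (θ : ℝ) :
    IntervalIntegrable (fun φ => (θ + φ) ^ s) volume (-θ) θ := by
  simpa [two_mul] using
    (intervalIntegral.intervalIntegrable_rpow' hs (a := 0) (b := 2 * θ)).comp_add_left θ

lemma intervalIntegrable_rpow_sub {s : ℝ} (hs : -1 < s) (θ : ℝ) :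
    IntervalIntegrable (fun φ => (θ - φ) ^ s) volume (-θ) θ := by
  simpa [two_mul] using
    (intervalIntegral.intervalIntegrable_rpow' hs (a := 2 * θ) (b := 0)).comp_sub_left θ

lemma integral_rpow_add {s θ : ℝ} (hs : -1 < s) :
    ∫ φ in (-θ)..θ, (θ + φ) ^ s = (2 * θ) ^ (s + 1) / (s + 1) := by
  rw [intervalIntegral.integral_comp_add_left (fun t => t ^ s), integral_rpow (Or.inl hs),
    add_neg_cancel, Real.zero_rpow (by linarith), sub_zero, two_mul]

lemma integral_rpow_sub {s θ : ℝ} (hs : -1 < s) :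
    ∫ φ in (-θ)..θ, (θ - φ) ^ s = (2 * θ) ^ (s + 1) / (s + 1) := by
  rw [intervalIntegral.integral_comp_sub_left (fun t => t ^ s), integral_rpow (Or.inl hs),
    sub_self, Real.zero_rpow (by linarith), sub_zero, sub_neg_eq_add, two_mul]

lemma arcBound_pos {α : ℝ} (hα : 1 < α) : 0 < arcBound α := by
  have h₁ : 0 < α - 1 := by linarith
  have h₂ : 0 < 3 * α / 2 - 1 := by linarith
  unfold arcBound
  positivity

lemma intervalIntegrable_arcMajorant {α : ℝ} (hα : 1 < α) (θ : ℝ) :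
    IntervalIntegrable (arcMajorant α θ) volume (-θ) θ :=
  (((intervalIntegrable_rpow_add (by linarith) θ).const_mul _).add
    ((intervalIntegrable_rpow_sub (by linarith) θ).const_mul _)).add intervalIntegrable_const

lemma integral_arcMajorant_le {α θ : ℝ} (hα : 1 < α) (hθ₀ : 0 ≤ θ) (hθ : θ ≤ π) :
    ∫ φ in (-θ)..θ, arcMajorant α θ φ ≤ arcBound α := by
  have hq : -1 < α - 2 := by linarith
  have hpq : -1 < 3 * α / 2 - 2 := by linarith
  have h₁ : 0 < α - 1 := by linarith
  have h₂ : 0 < 3 * α / 2 - 1 := by linarith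
  simp only [arcMajorant]
  rw [intervalIntegral.integral_add (((intervalIntegrable_rpow_add hq θ).const_mul _).add
      ((intervalIntegrable_rpow_sub hpq θ).const_mul _)) intervalIntegrable_const,
    intervalIntegral.integral_add ((intervalIntegrable_rpow_add hq θ).const_mul _)
      ((intervalIntegrable_rpow_sub hpq θ).const_mul _),
    intervalIntegral.integral_const_mul, intervalIntegral.integral_const_mul,
    integral_rpow_add hq, integral_rpow_sub hpq, intervalIntegral.integral_const, smul_eq_mul,
    show α - 2 + 1 = α - 1 by ring, show 3 * α / 2 - 2 + 1 = 3 * α / 2 - 1 by ring,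
    sub_neg_eq_add, ← two_mul]
  unfold arcBound
  gcongr

lemma norm_integral_arcIntegrand_le {α r θ ξ : ℝ} (hα : 1 < α) (hr : 0 < r) (hξ : 0 ≤ ξ)
    (hθ : θ ∈ Set.Ioo 0 π) :
    ‖∫ φ in (-θ)..θ, arcIntegrand α r θ ξ φ‖ ≤ (4 / r) ^ (α / 2) * arcBound α :=
  calc _ ≤ ∫ φ in (-θ)..θ, (4 / r) ^ (α / 2) * arcMajorant α θ φ :=
        intervalIntegral.norm_integral_le_of_norm_le (by linarith [hθ.1])
          ((Measure.ae_ne volume θ).mono fun φ hne hφ =>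
            norm_arcIntegrand_le (by linarith) hr hξ hθ.2 ⟨hφ.1, hφ.2.lt_of_ne hne⟩)
          ((intervalIntegrable_arcMajorant hα θ).const_mul _)
    _ ≤ _ := by
        rw [intervalIntegral.integral_const_mul]
        gcongr
        exact integral_arcMajorant_le hα hθ.1.le hθ.2.le

/-- Bound on the circular-arc parametrization of `J(ξ + re^{iθ}, ξ)`: for `α > 1`
there is `C = C(α) > 0`, independent of `r, θ, ξ`, with `|J(ξ + re^{iθ}, ξ)| ≤ C r^{α-1}`. -/
theorem J_bound_circular (α : ℝ) (hα : 1 < α) :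
    ∃ C > 0, ∀ r θ ξ : ℝ, 0 < r → θ ∈ Set.Ioo 0 Real.pi → 0 < ξ →
      ‖(Complex.I * (r : ℂ) ^ ((3 * α / 2 - 1 : ℝ) : ℂ) *
        ∫ φ in (-θ)..θ,
          (Complex.exp (φ * Complex.I) - Complex.exp (θ * Complex.I)) ^ (α : ℂ) *
          (Complex.exp (φ * Complex.I) - Complex.exp (-θ * Complex.I)) ^ ((α : ℂ) - 2) *
          ((ξ : ℂ) + r * Complex.exp (φ * Complex.I)) ^ (-(α : ℂ) / 2) *
          Complex.exp (φ * Complex.I * (1 - α / 2)))‖ ≤ C * r ^ (α - 1) := by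
  refine ⟨4 ^ (α / 2) * arcBound α, mul_pos (by positivity) (arcBound_pos hα),
    fun r θ ξ hr hθ hξ => ?_⟩
  rw [norm_mul, norm_mul, norm_I, one_mul, norm_cpow_eq_rpow_re_of_pos hr, ofReal_re]
  calc _ ≤ r ^ (3 * α / 2 - 1) * ((4 / r) ^ (α / 2) * arcBound α) := by
        gcongr
        exact norm_integral_arcIntegrand_le hα hr hξ.le hθ
    _ = 4 ^ (α / 2) * arcBound α * r ^ (α - 1) := by
        rw [show α - 1 = 3 * α / 2 - 1 - α / 2 by ring, Real.rpow_sub hr (3 * α / 2 - 1),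
          Real.div_rpow (by norm_num) hr.le]
        ring
end

section
/- Let α > 1, ξ > 0, and z = x + iy in the upper half-plane with x > ξ. With J(z, ξ) given by the vertical-segment parametrization J(z, ξ) = ∫_{-y}^{y} (is - iy)^α (is + iy)^{α-2} (x + is)^{-α/2} (x - ξ + is)^{-α/2} i ds, one has Re J(x, ξ) = 0 in the limit y ↓ 0; more precisely, |Re J(x+iy, ξ)| ≤ C y^{2α-1} for x > ξ fixed, so Re J(x+i0, ξ) = 0. -/
/-!
On the segment `s ∈ (-y, y]` the factor `(is - iy)^α` has modulus at most `(2y)^α`, the factors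
`(x + is)^{-α/2}` and `(x - ξ + is)^{-α/2}` have modulus at most `x^{-α/2}` and `(x - ξ)^{-α/2}`,
and `|(is + iy)^{α-2}| = (s + y)^{α-2}` is integrable because `α - 2 > -1`. Integrating gives
`|J| ≤ (2y)^α x^{-α/2} (x - ξ)^{-α/2} (2y)^{α-1} / (α - 1)`, which is `C y^{2α-1}`.
-/

open Complex Set intervalIntegral

lemma norm_I_mul_ofReal_cpow (t r : ℝ) : ‖(I * t) ^ (r : ℂ)‖ = |t| ^ r := by
  rw [norm_cpow_real, norm_mul, norm_I, one_mul, norm_real, Real.norm_eq_abs]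

lemma norm_ofReal_add_I_mul_cpow_le {a r : ℝ} (ha : 0 < a) (hr : r ≤ 0) (s : ℝ) :
    ‖((a : ℂ) + I * s) ^ (r : ℂ)‖ ≤ a ^ r := by
  rw [norm_cpow_real]
  refine Real.rpow_le_rpow_of_nonpos ha ?_ hr
  simpa [abs_of_pos ha] using abs_re_le_norm ((a : ℂ) + I * s)

lemma norm_J_integrand_le {α x ξ y s : ℝ} (hα : 0 ≤ α) (hξx : ξ < x) (hx : 0 < x)
    (hs : s ∈ Ioc (-y) y) :
    ‖(I * s - I * y) ^ (α : ℂ) * (I * s + I * y) ^ ((α : ℂ) - 2) *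
        ((x : ℂ) + I * s) ^ (-(α : ℂ) / 2) * ((x : ℂ) - ξ + I * s) ^ (-(α : ℂ) / 2) * I‖ ≤
      (2 * y) ^ α * x ^ (-α / 2) * (x - ξ) ^ (-α / 2) * (s + y) ^ (α - 2) := by
  obtain ⟨hys, hsy⟩ := hs
  have hs₀ : 0 < s + y := by linarith
  have hy₀ : 0 ≤ 2 * y := by linarith
  have e₁ : I * s - I * y = I * ((s - y : ℝ) : ℂ) := by push_cast; ring
  have e₂ : I * s + I * y = I * ((s + y : ℝ) : ℂ) := by push_cast; ring
  have e₃ : (x : ℂ) - ξ + I * s = ((x - ξ : ℝ) : ℂ) + I * s := by push_cast; ring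
  have e₄ : (α : ℂ) - 2 = ((α - 2 : ℝ) : ℂ) := by push_cast; ring
  have e₅ : -(α : ℂ) / 2 = ((-α / 2 : ℝ) : ℂ) := by push_cast; ring
  rw [e₁, e₂, e₃, e₄, e₅, norm_mul, norm_mul, norm_mul, norm_mul, norm_I, mul_one,
    norm_I_mul_ofReal_cpow, norm_I_mul_ofReal_cpow, abs_of_pos hs₀]
  have h₁ : |s - y| ^ α ≤ (2 * y) ^ α :=
    Real.rpow_le_rpow (abs_nonneg _) (abs_le.2 ⟨by linarith, by linarith⟩) hα
  have h₃ := norm_ofReal_add_I_mul_cpow_le hx (by linarith : -α / 2 ≤ 0) s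
  have h₄ := norm_ofReal_add_I_mul_cpow_le (sub_pos.2 hξx) (by linarith : -α / 2 ≤ 0) s
  calc |s - y| ^ α * (s + y) ^ (α - 2) * ‖((x : ℂ) + I * s) ^ ((-α / 2 : ℝ) : ℂ)‖ *
        ‖(((x - ξ : ℝ) : ℂ) + I * s) ^ ((-α / 2 : ℝ) : ℂ)‖
      ≤ (2 * y) ^ α * (s + y) ^ (α - 2) * x ^ (-α / 2) * (x - ξ) ^ (-α / 2) := by gcongr
    _ = _ := by ring

lemma intervalIntegrable_add_rpow {r : ℝ} (hr : -1 < r) (y a b : ℝ) :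
    IntervalIntegrable (fun s ↦ (s + y) ^ r) MeasureTheory.volume a b := by
  simpa using (intervalIntegrable_rpow' hr (a := a + y) (b := b + y)).comp_add_right y

lemma integral_add_rpow {r y : ℝ} (hr : -1 < r) :
    ∫ s in (-y)..y, (s + y) ^ r = (2 * y) ^ (r + 1) / (r + 1) := by
  rw [integral_comp_add_right (· ^ r), integral_rpow (Or.inl hr), neg_add_cancel,
    Real.zero_rpow (by linarith), sub_zero, two_mul]

/-- For `α > 1`, `ξ > 0`, and fixed `x > ξ`, the real part of the vertical-segment
parametrization of `J(x+iy, ξ)` satisfies `|Re J(x+iy, ξ)| ≤ C y^{2α-1}`;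
in particular `Re J(x + i0, ξ) = 0` in the limit `y ↓ 0`. -/
theorem reJ_vanishes_on_real_axis (α : ℝ) (hα : 1 < α) (x ξ : ℝ) (hx : ξ < x) (hξ : 0 < ξ) :
    ∃ C > 0, ∀ y : ℝ, 0 < y →
      |(∫ s in (-y)..y,
          (Complex.I * s - Complex.I * y) ^ (α : ℂ) *
          (Complex.I * s + Complex.I * y) ^ ((α : ℂ) - 2) *
          ((x : ℂ) + Complex.I * s) ^ (-(α : ℂ) / 2) *
          ((x : ℂ) - ξ + Complex.I * s) ^ (-(α : ℂ) / 2) * Complex.I).re| ≤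
        C * y ^ (2 * α - 1) := by
  have hx₀ : 0 < x := hξ.trans hx
  have hxξ : 0 < x - ξ := sub_pos.2 hx
  have hα₁ : 0 < α - 1 := by linarith
  have hr : -1 < α - 2 := by linarith
  refine ⟨2 ^ (2 * α - 1) * x ^ (-α / 2) * (x - ξ) ^ (-α / 2) / (α - 1), by positivity,
    fun y hy ↦ ?_⟩
  refine (abs_re_le_norm _).trans <| (norm_integral_le_of_norm_le (by linarith)
    (MeasureTheory.ae_of_all _ fun s hs ↦ norm_J_integrand_le (by linarith) hx hx₀ hs)
    ((intervalIntegrable_add_rpow hr y _ _).const_mul _)).trans_eq ?_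
  have h2y : (2 * y) ^ α * (2 * y) ^ (α - 1) = 2 ^ (2 * α - 1) * y ^ (2 * α - 1) := by
    rw [← Real.rpow_add (by positivity), ← Real.mul_rpow zero_le_two hy.le]
    ring_nf
  rw [integral_const_mul, integral_add_rpow hr, show α - 2 + 1 = α - 1 by ring]
  linear_combination x ^ (-α / 2) * (x - ξ) ^ (-α / 2) / (α - 1) * h2y
end
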